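/- In the Kauffman monoid K_n, for any 1 ≤ i ≤ j < n with i and j of the same parity, the element c·h[j,i] is a product of idempotents of the form h_{k+1}h_k and h_k h_{k+1}. -/
import Mathlib


namespace Kauffman

open FreeMonoid

/-- Defining relations of the Kauffman monoid `K n`: letter `0` is the generator `c`,
letter `i` (for `1 ≤ i < n`) is the generator `h_i`.  The relations are
`h_i h_j = h_j h_i` for `|i - j| ≥ 2`, `h_i h_j h_i = h_i` for `|i - j| = 1`, and
`h_i ^ 2 = c h_i = h_i c`. -/
inductive Rel (n : ℕ) : FreeMonoid ℕ → FreeMonoid ℕ → Prop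
  | comm (i j : ℕ) : 1 ≤ i → i < n → 1 ≤ j → j < n → i + 2 ≤ j →
      Rel n (of i * of j) (of j * of i)
  | braid₁ (i : ℕ) : 1 ≤ i → i + 1 < n →
      Rel n (of i * of (i + 1) * of i) (of i)
  | braid₂ (i : ℕ) : 1 ≤ i → i + 1 < n →
      Rel n (of (i + 1) * of i * of (i + 1)) (of (i + 1))
  | sq (i : ℕ) : 1 ≤ i → i < n → Rel n (of i * of i) (of 0 * of i)
  | ccomm (i : ℕ) : 1 ≤ i → i < n → Rel n (of 0 * of i) (of i * of 0)

def kcon (n : ℕ) : Con (FreeMonoid ℕ) := conGen (Rel n)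

/-- The Kauffman monoid `K_n`, as the quotient of the free monoid by the defining relations. -/
abbrev K (n : ℕ) := (kcon n).Quotient

/-- The generator `c` of `K n`. -/
def C (n : ℕ) : K n := (kcon n).mk' (of 0)

/-- The generator `h_i` of `K n` (meaningful for `1 ≤ i < n`). -/
def H (n : ℕ) (i : ℕ) : K n := (kcon n).mk' (of i)

/-- Descending block `h[j,i] = h_j h_{j-1} ⋯ h_i` (for `i ≤ j`). -/
def blockD (n j i : ℕ) : K n := ((List.range' i (j + 1 - i)).reverse.map (H n)).prod

/-- Ascending block `h[i,j] = h_i h_{i+1} ⋯ h_j` (for `i ≤ j`). -/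
def blockA (n i j : ℕ) : K n := ((List.range' i (j + 1 - i)).map (H n)).prod

/-- General `h[i,j]`: ascending product if `i ≤ j`, descending otherwise. -/
def hb (n i j : ℕ) : K n := if i ≤ j then blockA n i j else blockD n i j

/-- The set `E'_n` of the length-two idempotents `h_{i+1} h_i` and `h_i h_{i+1}`. -/
def E' (n : ℕ) : Set (K n) :=
  {x | ∃ i, 1 ≤ i ∧ i + 1 < n ∧ (x = H n (i + 1) * H n i ∨ x = H n i * H n (i + 1))}

lemma rel_eq {n : ℕ} {x y : FreeMonoid ℕ} (h : Rel n x y) :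
    (kcon n).mk' x = (kcon n).mk' y :=
  (Con.eq _).mpr (ConGen.Rel.of _ _ h)

lemma sq_eq {n i : ℕ} (h1 : 1 ≤ i) (h2 : i < n) :
    H n i * H n i = C n * H n i := by
  have := rel_eq (Rel.sq (n := n) i h1 h2)
  simpa [H, C, map_mul] using this

lemma ccomm_eq {n i : ℕ} (h1 : 1 ≤ i) (h2 : i < n) :
    C n * H n i = H n i * C n := by
  have := rel_eq (Rel.ccomm (n := n) i h1 h2)
  simpa [H, C, map_mul] using this

lemma braid1_eq {n i : ℕ} (h1 : 1 ≤ i) (h2 : i + 1 < n) :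
    H n i * H n (i+1) * H n i = H n i := by
  have := rel_eq (Rel.braid₁ (n := n) i h1 h2)
  simpa [H, map_mul] using this

lemma braid2_eq {n i : ℕ} (h1 : 1 ≤ i) (h2 : i + 1 < n) :
    H n (i+1) * H n i * H n (i+1) = H n (i+1) := by
  have := rel_eq (Rel.braid₂ (n := n) i h1 h2)
  simpa [H, map_mul] using this

lemma lemA {n i : ℕ} (h1 : 1 ≤ i) (h2 : i + 1 < n) :
    (H n i * H n (i+1)) * (H n (i+1) * H n i) = C n * H n i := by
  have hn1 : i + 1 < n := h2
  calc (H n i * H n (i+1)) * (H n (i+1) * H n i)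
      = H n i * (H n (i+1) * H n (i+1)) * H n i := by simp [mul_assoc]
    _ = H n i * (C n * H n (i+1)) * H n i := by
        rw [sq_eq (by omega) hn1]
    _ = (H n i * C n) * (H n (i+1) * H n i) := by simp [mul_assoc]
    _ = (C n * H n i) * (H n (i+1) * H n i) := by
        rw [← ccomm_eq h1 (by omega)]
    _ = C n * (H n i * H n (i+1) * H n i) := by simp [mul_assoc]
    _ = C n * H n i := by rw [braid1_eq h1 h2]

lemma lemB {n i : ℕ} (h1 : 1 ≤ i) (h2 : i + 1 < n) :
    (H n (i+1) * H n i) * (H n i * H n (i+1)) = C n * H n (i+1) := by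
  calc (H n (i+1) * H n i) * (H n i * H n (i+1))
      = H n (i+1) * (H n i * H n i) * H n (i+1) := by simp [mul_assoc]
    _ = H n (i+1) * (C n * H n i) * H n (i+1) := by
        rw [sq_eq h1 (by omega)]
    _ = (H n (i+1) * C n) * (H n i * H n (i+1)) := by simp [mul_assoc]
    _ = (C n * H n (i+1)) * (H n i * H n (i+1)) := by
        rw [← ccomm_eq (by omega) h2]
    _ = C n * (H n (i+1) * H n i * H n (i+1)) := by simp [mul_assoc]
    _ = C n * H n (i+1) := by rw [braid2_eq h1 h2]

lemma cH_mem {n : ℕ} (hn : 3 ≤ n) {j : ℕ} (h1 : 1 ≤ j) (h2 : j < n) :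
    C n * H n j ∈ Subsemigroup.closure (E' n) := by
  by_cases hj : j + 1 < n
  · rw [← lemA h1 hj]
    exact mul_mem (Subsemigroup.subset_closure ⟨j, h1, hj, Or.inr rfl⟩)
      (Subsemigroup.subset_closure ⟨j, h1, hj, Or.inl rfl⟩)
  · obtain ⟨i, rfl⟩ : ∃ i, j = i + 1 := ⟨j - 1, by omega⟩
    have hi1 : 1 ≤ i := by omega
    have hi2 : i + 1 < n := by omega
    rw [← lemB hi1 hi2]
    exact mul_mem (Subsemigroup.subset_closure ⟨i, hi1, hi2, Or.inl rfl⟩)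
      (Subsemigroup.subset_closure ⟨i, hi1, hi2, Or.inr rfl⟩)

lemma blockD_self (n j : ℕ) : blockD n j j = H n j := by
  simp [blockD]

lemma blockD_peel (n j i : ℕ) (h : i + 1 ≤ j) :
    blockD n j i = blockD n j (i+2) * (H n (i+1) * H n i) := by
  unfold blockD
  have h1 : j + 1 - i = (j + 1 - (i+2)) + 1 + 1 := by omega
  rw [h1, List.range'_succ, List.range'_succ]
  simp [mul_assoc]

lemma main_aux {n : ℕ} (hn : 3 ≤ n) :
    ∀ k i : ℕ, 1 ≤ i → i + 2*k < n →
      C n * blockD n (i + 2*k) i ∈ Subsemigroup.closure (E' n) := by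
  intro k
  induction k with
  | zero =>
    intro i h1 h2
    simpa [blockD_self] using cH_mem hn h1 (by omega)
  | succ k ih =>
    intro i h1 h2
    have hpe : i + 1 ≤ i + 2*(k+1) := by omega
    rw [blockD_peel _ _ _ hpe, ← mul_assoc]
    have heq : i + 2*(k+1) = (i+2) + 2*k := by omega
    have hmem : C n * blockD n (i + 2*(k+1)) (i+2) ∈ Subsemigroup.closure (E' n) := by
      rw [heq]; exact ih (i+2) (by omega) (by omega)
    exact mul_mem hmem
      (Subsemigroup.subset_closure ⟨i, h1, by omega, Or.inl rfl⟩)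

/-- For `1 ≤ i ≤ j < n` with `i, j` of the same parity (a non-white
block), `c · h[j,i]` is a product of the idempotents of `E'_n`. -/
theorem c_mul_nonwhite_block_in_closure (n : ℕ) (hn : 3 ≤ n) (i j : ℕ)
    (h1 : 1 ≤ i) (h2 : i ≤ j) (h3 : j < n) (hpar : i % 2 = j % 2) :
    C n * blockD n j i ∈ Subsemigroup.closure (E' n) := by
  obtain ⟨k, rfl⟩ : ∃ k, j = i + 2*k := ⟨(j - i)/2, by omega⟩
  exact main_aux hn k i h1 h3

end Kauffman
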